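/- If ρ_A⊗1 ≥ ρ > 0 (strictly positive density matrices), then the von Neumann entropies satisfy S(ρ_A) ≤ S(ρ), where S(σ) = −Tr(σ log σ). -/

import Mathlib

open Matrix Kronecker
open scoped ComplexOrder Classical

/-- Partial trace over the B factor: `ρ_A = Tr_B ρ`. -/
noncomputable def ptraceB {nA nB : Type*} [Fintype nB] (ρ : Matrix (nA × nB) (nA × nB) ℂ) :
    Matrix nA nA ℂ := fun i j => ∑ k, ρ (i, k) (j, k)

/-- The von Neumann entropy `S(A) = −Tr(A log A)`, via eigenvalues of a Hermitian matrix
(junk value `0` otherwise). -/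
noncomputable def vnEntropy {n : Type*} [Fintype n] [DecidableEq n]
    (A : Matrix n n ℂ) : ℝ :=
  if h : A.IsHermitian then -∑ i, h.eigenvalues i * Real.log (h.eigenvalues i) else 0

namespace McfcAux

open MeasureTheory Set Filter Topology


/-- For `0 < a ≤ b`, the function `t ↦ (a+t)⁻¹ - (b+t)⁻¹` is integrable on `(0,∞)`
with integral `log b - log a`. -/
lemma aux_int_le {a b : ℝ} (ha : 0 < a) (hab : a ≤ b) :
    IntegrableOn (fun t => (a+t)⁻¹ - (b+t)⁻¹) (Ioi (0:ℝ)) ∧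
      ∫ t in Ioi (0:ℝ), ((a+t)⁻¹ - (b+t)⁻¹) = Real.log b - Real.log a := by
  have hb : 0 < b := lt_of_lt_of_le ha hab
  set g : ℝ → ℝ := fun t => Real.log (a+t) - Real.log (b+t) with hg
  have hderiv : ∀ t ∈ Ici (0:ℝ), HasDerivAt g ((a+t)⁻¹ - (b+t)⁻¹) t := by
    intro t ht
    have ht' : (0:ℝ) ≤ t := ht
    have h1 : HasDerivAt (fun t : ℝ => Real.log (b+t)) ((b+t)⁻¹) t := by
      have : HasDerivAt (fun t : ℝ => b + t) 1 t := (hasDerivAt_id t).const_add b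
      simpa [Function.comp_def] using (Real.hasDerivAt_log (by positivity)).comp t this
    have h2 : HasDerivAt (fun t : ℝ => Real.log (a+t)) ((a+t)⁻¹) t := by
      have : HasDerivAt (fun t : ℝ => a + t) 1 t := (hasDerivAt_id t).const_add a
      simpa [Function.comp_def] using (Real.hasDerivAt_log (by positivity)).comp t this
    exact h2.sub h1
  have hpos : ∀ t ∈ Ioi (0:ℝ), 0 ≤ (a+t)⁻¹ - (b+t)⁻¹ := by
    intro t ht
    have ht' : (0:ℝ) < t := ht
    have : (b+t)⁻¹ ≤ (a+t)⁻¹ := by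
      apply inv_anti₀ (by positivity) (by linarith)
    linarith
  have htend : Tendsto g atTop (𝓝 0) := by
    have h1 : Tendsto (fun t : ℝ => (a+t)/(b+t)) atTop (𝓝 1) := by
      have : (fun t : ℝ => (a+t)/(b+t)) =ᶠ[atTop] fun t => (a*t⁻¹+1)/(b*t⁻¹+1) := by
        filter_upwards [eventually_gt_atTop (0:ℝ)] with t ht
        rw [div_eq_div_iff (by positivity) (by positivity)]
        field_simp
      rw [tendsto_congr' this]
      have hx : Tendsto (fun t : ℝ => t⁻¹) atTop (𝓝 0) := tendsto_inv_atTop_zero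
      have : Tendsto (fun t : ℝ => (a*t⁻¹+1)/(b*t⁻¹+1)) atTop (𝓝 ((a*0+1)/(b*0+1))) := by
        apply Tendsto.div
        · exact ((hx.const_mul a).add tendsto_const_nhds)
        · exact ((hx.const_mul b).add tendsto_const_nhds)
        · norm_num
      simpa using this
    have h2 : Tendsto Real.log (𝓝 1) (𝓝 0) := by
      simpa using (Real.continuousAt_log (by norm_num : (1:ℝ) ≠ 0)).tendsto
    have := h2.comp h1
    apply this.congr'
    filter_upwards [eventually_gt_atTop (0:ℝ)] with t ht
    simp only [Function.comp_apply, hg]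
    rw [Real.log_div (by positivity) (by positivity)]
  have hcont : ContinuousWithinAt g (Ici (0:ℝ)) 0 :=
    (hderiv 0 self_mem_Ici).continuousAt.continuousWithinAt
  have hint : IntegrableOn (fun t => (a+t)⁻¹ - (b+t)⁻¹) (Ioi (0:ℝ)) :=
    integrableOn_Ioi_deriv_of_nonneg hcont (fun t ht => hderiv t (Ioi_subset_Ici_self ht)) hpos htend
  refine ⟨hint, ?_⟩
  rw [integral_Ioi_of_hasDerivAt_of_tendsto hcont (fun t ht => hderiv t (Ioi_subset_Ici_self ht)) hint htend]
  simp [hg, Real.log_div, ha.ne', hb.ne']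

/-- Main scalar lemma: `∫_0^∞ ((1+t)⁻¹ - (a+t)⁻¹) dt = log a` for `a > 0`. -/
lemma scalar_log_integral {a : ℝ} (ha : 0 < a) :
    IntegrableOn (fun t => (1+t)⁻¹ - (a+t)⁻¹) (Ioi (0:ℝ)) ∧
      ∫ t in Ioi (0:ℝ), ((1+t)⁻¹ - (a+t)⁻¹) = Real.log a := by
  rcases le_total 1 a with h | h
  · have := aux_int_le one_pos h
    simpa using this
  · obtain ⟨h1, h2⟩ := aux_int_le ha h
    constructor
    · have h3 : (fun t : ℝ => (1+t)⁻¹ - (a+t)⁻¹) = fun t => -((a+t)⁻¹ - (1+t)⁻¹) := by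
        funext t; ring
      rw [h3]
      exact h1.neg
    · have : (fun t : ℝ => (1+t)⁻¹ - (a+t)⁻¹) = fun t => -((a+t)⁻¹ - (1+t)⁻¹) := by
        funext t; ring
      rw [this, integral_neg, h2]
      simp

variable {n m : Type*} [Fintype n] [DecidableEq n] [Fintype m] [DecidableEq m]
variable {A : Matrix n n ℂ}

lemma star_mul_self (hA : A.IsHermitian) :
    star (hA.eigenvectorUnitary : Matrix n n ℂ) * (hA.eigenvectorUnitary : Matrix n n ℂ) = 1 :=
  Unitary.coe_star_mul_self hA.eigenvectorUnitary

lemma mul_star_self (hA : A.IsHermitian) :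
    (hA.eigenvectorUnitary : Matrix n n ℂ) * star (hA.eigenvectorUnitary : Matrix n n ℂ) = 1 :=
  Unitary.coe_mul_star_self hA.eigenvectorUnitary

lemma mcfc_def (hA : A.IsHermitian) (f : ℝ → ℝ) :
    hA.cfc f = (hA.eigenvectorUnitary : Matrix n n ℂ) *
      diagonal (Complex.ofReal ∘ f ∘ hA.eigenvalues) *
      star (hA.eigenvectorUnitary : Matrix n n ℂ) := rfl

lemma mcfc_mul (hA : A.IsHermitian) (f g : ℝ → ℝ) :
    hA.cfc f * hA.cfc g = hA.cfc (fun x => f x * g x) := by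
  rw [mcfc_def, mcfc_def, mcfc_def]
  have h : ∀ X Y : Matrix n n ℂ,
      ((hA.eigenvectorUnitary : Matrix n n ℂ) * X * star (hA.eigenvectorUnitary : Matrix n n ℂ)) *
      ((hA.eigenvectorUnitary : Matrix n n ℂ) * Y * star (hA.eigenvectorUnitary : Matrix n n ℂ)) =
      (hA.eigenvectorUnitary : Matrix n n ℂ) * (X * Y) *
        star (hA.eigenvectorUnitary : Matrix n n ℂ) := by
    intro X Y
    calc _ = (hA.eigenvectorUnitary : Matrix n n ℂ) * (X *
        ((star (hA.eigenvectorUnitary : Matrix n n ℂ)) * (hA.eigenvectorUnitary : Matrix n n ℂ))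
        * Y) * star (hA.eigenvectorUnitary : Matrix n n ℂ) := by
          simp only [Matrix.mul_assoc]
      _ = _ := by rw [star_mul_self hA]; simp [Matrix.mul_assoc]
  rw [h, diagonal_mul_diagonal]
  congr 1
  ext i
  simp

lemma mcfc_one (hA : A.IsHermitian) : hA.cfc (fun _ => 1) = 1 := by
  rw [mcfc_def]
  have : diagonal (Complex.ofReal ∘ (fun _ => (1:ℝ)) ∘ hA.eigenvalues) = (1 : Matrix n n ℂ) := by
    simp [Function.comp_def]
  rw [this, Matrix.mul_one, mul_star_self hA]

lemma mcfc_id (hA : A.IsHermitian) : hA.cfc (fun x => x) = A := by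
  rw [mcfc_def]
  exact hA.spectral_theorem.symm

lemma mcfc_herm (hA : A.IsHermitian) (f : ℝ → ℝ) : (hA.cfc f).IsHermitian := by
  have hd : star (Complex.ofReal ∘ f ∘ hA.eigenvalues) = Complex.ofReal ∘ f ∘ hA.eigenvalues := by
    funext i
    simp [Function.comp_def]
  rw [mcfc_def, Matrix.IsHermitian]
  simp only [star_eq_conjTranspose, conjTranspose_mul, conjTranspose_conjTranspose,
    diagonal_conjTranspose, hd, Matrix.mul_assoc]

lemma mcfc_add (hA : A.IsHermitian) (f g : ℝ → ℝ) :
    hA.cfc f + hA.cfc g = hA.cfc (fun x => f x + g x) := by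
  rw [mcfc_def, mcfc_def, mcfc_def, ← Matrix.add_mul, ← Matrix.mul_add, diagonal_add]
  refine congrArg₂ HMul.hMul (congrArg₂ HMul.hMul rfl
    (congrArg Matrix.diagonal (funext fun i => ?_))) rfl
  simp

lemma mcfc_const_smul (hA : A.IsHermitian) (t : ℝ) :
    hA.cfc (fun _ => t) = (t : ℂ) • 1 := by
  rw [mcfc_def]
  have : diagonal (Complex.ofReal ∘ (fun _ => t) ∘ hA.eigenvalues) =
      (t : ℂ) • (1 : Matrix n n ℂ) := by
    rw [smul_one_eq_diagonal]
    rfl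
  rw [this]
  rw [Matrix.mul_smul, Matrix.smul_mul, Matrix.mul_one, mul_star_self hA]

/-- Quadratic form of `hA.cfc f` via eigen-data. -/
lemma mcfc_form (hA : A.IsHermitian) (f : ℝ → ℝ) (x : n → ℂ) :
    star x ⬝ᵥ (hA.cfc f) *ᵥ x =
      ((∑ i, f (hA.eigenvalues i) *
        Complex.normSq ((star (hA.eigenvectorUnitary : Matrix n n ℂ) *ᵥ x) i) : ℝ) : ℂ) := by
  set U : Matrix n n ℂ := (hA.eigenvectorUnitary : Matrix n n ℂ) with hU
  set y : n → ℂ := star U *ᵥ x with hy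
  have hsy : star x ᵥ* U = star y := by
    rw [hy, star_mulVec]
    congr 1
    rw [← star_eq_conjTranspose, star_star]
  rw [mcfc_def]
  rw [← Matrix.mulVec_mulVec, ← Matrix.mulVec_mulVec, dotProduct_mulVec (star x), hsy, ← hy]
  have : diagonal (Complex.ofReal ∘ f ∘ hA.eigenvalues) *ᵥ y =
      fun i => (f (hA.eigenvalues i) : ℂ) * y i := by
    funext i
    simp [Matrix.mulVec_diagonal]
  rw [this]
  simp only [dotProduct, Pi.star_apply]
  push_cast
  refine Finset.sum_congr rfl fun i _ => ?_
  have h2 : (Complex.normSq (y i) : ℂ) = star (y i) * y i := by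
    rw [Complex.normSq_eq_conj_mul_self]; rfl
  rw [h2]; ring

lemma mcfc_trace (hA : A.IsHermitian) (f : ℝ → ℝ) :
    (hA.cfc f).trace = ((∑ i, f (hA.eigenvalues i) : ℝ) : ℂ) := by
  rw [mcfc_def, Matrix.trace_mul_cycle, star_mul_self hA, Matrix.one_mul,
    Matrix.trace_diagonal]
  push_cast
  rfl

/-- `(A + t•1)⁻¹ = cfc (fun s => (s+t)⁻¹)` when all shifted eigenvalues are nonzero. -/
lemma mcfc_inv_shift (hA : A.IsHermitian) (t : ℝ) (h : ∀ i, hA.eigenvalues i + t ≠ 0) :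
    (A + (t : ℂ) • 1)⁻¹ = hA.cfc (fun s => (s + t)⁻¹) := by
  have h1 : A + (t : ℂ) • 1 = hA.cfc (fun s => s + t) := by
    have h0 := mcfc_add hA (fun s => s) (fun _ => t)
    rw [mcfc_id hA, mcfc_const_smul hA] at h0
    exact h0
  have h2 : hA.cfc (fun s => s + t) * hA.cfc (fun s => (s + t)⁻¹) = 1 := by
    rw [mcfc_mul]
    rw [← mcfc_one hA]
    rw [mcfc_def, mcfc_def]
    refine congrArg₂ HMul.hMul (congrArg₂ HMul.hMul rfl
      (congrArg Matrix.diagonal (funext fun i => ?_))) rfl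
    simp [Function.comp_def, mul_inv_cancel₀ (h i)]
  rw [h1]
  exact Matrix.inv_eq_right_inv h2


lemma star_dot_inv_mulVec {σ : Matrix n n ℂ} (hσ : σ.PosDef) (x w : n → ℂ) :
    star (σ⁻¹ *ᵥ x) ⬝ᵥ w = star x ⬝ᵥ σ⁻¹ *ᵥ w := by
  have hsinv : (σ⁻¹).IsHermitian := hσ.inv.1
  rw [star_mulVec, hsinv.eq, dotProduct_mulVec]

lemma mul_inv_cancel_mulVec {σ : Matrix n n ℂ} (hσ : σ.PosDef) (x : n → ℂ) :
    σ *ᵥ (σ⁻¹ *ᵥ x) = x := by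
  rw [mulVec_mulVec, Matrix.mul_nonsing_inv _ (isUnit_iff_ne_zero.2 hσ.det_pos.ne'), one_mulVec]

lemma inv_mul_cancel_mulVec {σ : Matrix n n ℂ} (hσ : σ.PosDef) (x : n → ℂ) :
    σ⁻¹ *ᵥ (σ *ᵥ x) = x := by
  rw [mulVec_mulVec, Matrix.nonsing_inv_mul _ (isUnit_iff_ne_zero.2 hσ.det_pos.ne'), one_mulVec]

/-- Variational bound: `⟨y,x⟩ + ⟨x,y⟩ ≤ ⟨y,σy⟩ + ⟨x,σ⁻¹x⟩` for `σ` positive definite. -/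
lemma inv_form_bound {σ : Matrix n n ℂ} (hσ : σ.PosDef) (x y : n → ℂ) :
    star y ⬝ᵥ x + star x ⬝ᵥ y ≤ star y ⬝ᵥ σ *ᵥ y + star x ⬝ᵥ σ⁻¹ *ᵥ x := by
  set z : n → ℂ := y - σ⁻¹ *ᵥ x with hzdef
  have key : 0 ≤ star z ⬝ᵥ σ *ᵥ z := hσ.posSemidef.dotProduct_mulVec_nonneg z
  have hz : star z ⬝ᵥ σ *ᵥ z = star y ⬝ᵥ σ *ᵥ y - star y ⬝ᵥ x - star x ⬝ᵥ y
      + star x ⬝ᵥ σ⁻¹ *ᵥ x := by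
    have e1 : σ *ᵥ z = σ *ᵥ y - x := by
      rw [hzdef, Matrix.mulVec_sub, mul_inv_cancel_mulVec hσ]
    have e2 : star z = star y - star (σ⁻¹ *ᵥ x) := by
      rw [hzdef, star_sub]
    rw [e1, e2, sub_dotProduct, dotProduct_sub, dotProduct_sub,
      star_dot_inv_mulVec hσ, star_dot_inv_mulVec hσ, inv_mul_cancel_mulVec hσ]
    ring
  rw [← sub_nonneg]
  rw [hz] at key
  convert key using 1
  ring

/-- Loewner monotonicity of the inverse, at the level of quadratic forms. -/
lemma inv_form_mono {σ τ : Matrix n n ℂ} (hσ : σ.PosDef) (hτ : τ.PosDef)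
    (h : (τ - σ).PosSemidef) (x : n → ℂ) :
    star x ⬝ᵥ τ⁻¹ *ᵥ x ≤ star x ⬝ᵥ σ⁻¹ *ᵥ x := by
  set y : n → ℂ := τ⁻¹ *ᵥ x with hy
  have e : star y ⬝ᵥ τ *ᵥ y = star x ⬝ᵥ τ⁻¹ *ᵥ x := by
    rw [hy, star_dot_inv_mulVec hτ, inv_mul_cancel_mulVec hτ]
  have e2 : star y ⬝ᵥ x = star x ⬝ᵥ τ⁻¹ *ᵥ x := by
    rw [hy, star_dot_inv_mulVec hτ]
  have hq : star y ⬝ᵥ σ *ᵥ y ≤ star y ⬝ᵥ τ *ᵥ y := by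
    have := h.dotProduct_mulVec_nonneg y
    rw [Matrix.sub_mulVec, dotProduct_sub, sub_nonneg] at this
    exact this
  have haux := inv_form_bound hσ x y
  calc star x ⬝ᵥ τ⁻¹ *ᵥ x
      = (star y ⬝ᵥ x + star x ⬝ᵥ y) - star y ⬝ᵥ τ *ᵥ y := by rw [e, e2]; ring
    _ ≤ (star y ⬝ᵥ x + star x ⬝ᵥ y) - star y ⬝ᵥ σ *ᵥ y := by
        exact sub_le_sub_left hq _
    _ ≤ star x ⬝ᵥ σ⁻¹ *ᵥ x := by
        rw [sub_le_iff_le_add]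
        calc star y ⬝ᵥ x + star x ⬝ᵥ y ≤ star y ⬝ᵥ σ *ᵥ y + star x ⬝ᵥ σ⁻¹ *ᵥ x := haux
          _ = star x ⬝ᵥ σ⁻¹ *ᵥ x + star y ⬝ᵥ σ *ᵥ y := by ring

lemma trace_mul_nonneg {ρ K : Matrix n n ℂ} (hρ : ρ.PosSemidef) (hK : K.PosSemidef) :
    0 ≤ (ρ * K).trace := by
  obtain ⟨B, hB⟩ : ∃ B : Matrix n n ℂ, ρ = Bᴴ * B := by
    open scoped MatrixOrder Matrix.Norms.L2Operator in
    exact CStarAlgebra.nonneg_iff_eq_star_mul_self.mp hρ.nonneg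
  rw [hB, Matrix.mul_assoc, Matrix.trace_mul_comm]
  have hP : (B * K * Bᴴ).PosSemidef := hK.mul_mul_conjTranspose_same B
  have hd : ∀ i, 0 ≤ (B * K * Bᴴ) i i := by
    intro i
    have := hP.dotProduct_mulVec_nonneg (Pi.single i 1)
    simpa [dotProduct, Matrix.mulVec, Pi.single_apply] using this
  exact Finset.sum_nonneg fun i _ => hd i

lemma kron_one_herm {M : Matrix n n ℂ} (hM : M.IsHermitian) :
    (M ⊗ₖ (1 : Matrix m m ℂ)).IsHermitian := by
  ext ⟨i, k⟩ ⟨j, l⟩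
  simp only [conjTranspose_apply, kroneckerMap_apply, Matrix.one_apply, star_mul']
  rw [← conjTranspose_apply, hM.eq]
  rcases eq_or_ne l k with rfl | hlk
  · simp
  · simp [hlk, Ne.symm hlk]

/-- Quadratic form of `M ⊗ 1` decomposes into slices. -/
lemma kron_one_form (M : Matrix n n ℂ) (x : n × m → ℂ) :
    star x ⬝ᵥ (M ⊗ₖ (1 : Matrix m m ℂ)) *ᵥ x =
      ∑ k : m, star (fun i => x (i, k)) ⬝ᵥ M *ᵥ (fun i => x (i, k)) := by
  simp only [dotProduct, Matrix.mulVec, Pi.star_apply]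
  rw [Fintype.sum_prod_type]
  rw [Finset.sum_comm]
  refine Finset.sum_congr rfl fun k _ => ?_
  refine Finset.sum_congr rfl fun i _ => ?_
  congr 1
  rw [Fintype.sum_prod_type]
  refine Finset.sum_congr rfl fun j _ => ?_
  simp [Matrix.one_apply, mul_ite, ite_mul, mul_zero, zero_mul, Finset.sum_ite_eq,
    Finset.sum_ite_eq']

lemma kron_one_trace (ρ : Matrix (n × m) (n × m) ℂ) (M : Matrix n n ℂ)
    (P : Matrix n n ℂ) (hP : ∀ i j, P i j = ∑ k, ρ (i, k) (j, k)) :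
    (ρ * (M ⊗ₖ (1 : Matrix m m ℂ))).trace = (P * M).trace := by
  simp only [Matrix.trace, Matrix.diag, Matrix.mul_apply, hP, Finset.sum_mul]
  rw [Fintype.sum_prod_type]
  refine Finset.sum_congr rfl fun i _ => ?_
  have lhs : ∀ k : m, ∑ p : n × m, ρ (i,k) p * (M ⊗ₖ (1 : Matrix m m ℂ)) p (i,k)
      = ∑ j, ρ (i,k) (j,k) * M j i := by
    intro k
    rw [Fintype.sum_prod_type]
    refine Finset.sum_congr rfl fun j _ => ?_
    simp [Matrix.one_apply, mul_ite, ite_mul, mul_zero, zero_mul, Finset.sum_ite_eq,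
      Finset.sum_ite_eq', mul_comm, mul_assoc, mul_left_comm]
  simp only [lhs]
  rw [Finset.sum_comm]

lemma kron_one_shift_inv (M : Matrix n n ℂ) (t : ℝ) :
    ((M ⊗ₖ (1 : Matrix m m ℂ)) + (t : ℂ) • 1)⁻¹ = (M + (t : ℂ) • 1)⁻¹ ⊗ₖ 1 := by
  have h1 : (M ⊗ₖ (1 : Matrix m m ℂ)) + (t : ℂ) • 1 = (M + (t : ℂ) • 1) ⊗ₖ 1 := by
    rw [Matrix.add_kronecker, Matrix.smul_kronecker, Matrix.one_kronecker_one]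
  rw [h1, Matrix.inv_kronecker, inv_one]

lemma smul_one_posSemidef {t : ℝ} (ht : 0 ≤ t) :
    ((t : ℂ) • (1 : Matrix n n ℂ)).PosSemidef := by
  rw [smul_one_eq_diagonal]
  refine PosSemidef.diagonal ?_
  intro i
  show (0:ℂ) ≤ (t:ℂ)
  exact_mod_cast ht

lemma shift_posDef {σ : Matrix n n ℂ} (hσ : σ.PosDef) {t : ℝ} (ht : 0 ≤ t) :
    (σ + (t : ℂ) • 1).PosDef :=
  hσ.add_posSemidef (smul_one_posSemidef ht)


/-- weights of a vector in the eigenbasis -/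
noncomputable def wt (hA : A.IsHermitian) (x : n → ℂ) (i : n) : ℝ :=
  Complex.normSq ((star (hA.eigenvectorUnitary : Matrix n n ℂ) *ᵥ x) i)

lemma wt_nonneg (hA : A.IsHermitian) (x : n → ℂ) (i : n) : 0 ≤ wt hA x i :=
  Complex.normSq_nonneg _

lemma form_one (hA : A.IsHermitian) (x : n → ℂ) :
    star x ⬝ᵥ x = ((∑ i, wt hA x i : ℝ) : ℂ) := by
  have h := mcfc_form hA (fun _ => 1) x
  rw [mcfc_one hA, one_mulVec] at h
  simpa [wt] using h

lemma form_resolvent (hp : A.PosDef) (x : n → ℂ) {t : ℝ} (ht : 0 ≤ t) :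
    star x ⬝ᵥ (A + (t : ℂ) • 1)⁻¹ *ᵥ x =
      ((∑ i, (hp.1.eigenvalues i + t)⁻¹ * wt hp.1 x i : ℝ) : ℂ) := by
  rw [mcfc_inv_shift hp.1 t (fun i => by have := hp.eigenvalues_pos i; positivity),
    mcfc_form hp.1]
  rfl

/-- Integral representation of the `log` quadratic form. -/
lemma intrep (hp : A.PosDef) (x : n → ℂ) :
    IntegrableOn
      (fun t => ∑ i, wt hp.1 x i * ((1+t)⁻¹ - (hp.1.eigenvalues i + t)⁻¹)) (Ioi (0:ℝ)) ∧
    ∫ t in Ioi (0:ℝ), (∑ i, wt hp.1 x i * ((1+t)⁻¹ - (hp.1.eigenvalues i + t)⁻¹)) =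
      ∑ i, wt hp.1 x i * Real.log (hp.1.eigenvalues i) := by
  constructor
  · exact integrable_finset_sum _ fun i _ =>
      ((scalar_log_integral (hp.eigenvalues_pos i)).1.const_mul _)
  · rw [integral_finset_sum _ fun i _ =>
      ((scalar_log_integral (hp.eigenvalues_pos i)).1.const_mul _)]
    refine Finset.sum_congr rfl fun i _ => ?_
    rw [show (fun t : ℝ => wt hp.1 x i * ((1+t)⁻¹ - (hp.1.eigenvalues i + t)⁻¹))
        = fun t : ℝ => wt hp.1 x i • ((1+t)⁻¹ - (hp.1.eigenvalues i + t)⁻¹) from rfl,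
      integral_smul, (scalar_log_integral (hp.eigenvalues_pos i)).2, smul_eq_mul]

/-- The key positivity: `log(ρ_A) ⊗ 1 - log ρ ⪰ 0` when `ρ_A ⊗ 1 ≥ ρ > 0`. -/
lemma key_psd {ρ : Matrix (n × m) (n × m) ℂ} {P : Matrix n n ℂ}
    (hρ : ρ.PosDef) (hP : P.PosDef)
    (hred : (P ⊗ₖ (1 : Matrix m m ℂ) - ρ).PosSemidef) :
    ((hP.1.cfc Real.log) ⊗ₖ (1 : Matrix m m ℂ) - hρ.1.cfc Real.log).PosSemidef := by
  have hσ : (P ⊗ₖ (1 : Matrix m m ℂ)).PosDef := by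
    have := hρ.add_posSemidef hred
    rwa [add_sub_cancel] at this
  refine PosSemidef.of_dotProduct_mulVec_nonneg ?_ ?_
  · exact (kron_one_herm (mcfc_herm hP.1 _)).sub (mcfc_herm hρ.1 _)
  intro x
  set xk : m → n → ℂ := fun k i => x (i, k) with hxk
  set w : m → n → ℝ := fun k => wt hP.1 (xk k) with hw
  set v : (n × m) → ℝ := wt hρ.1 x with hv
  set μ : n → ℝ := hP.1.eigenvalues with hμ
  set lam : (n × m) → ℝ := hρ.1.eigenvalues with hlam
  set gk : m → ℝ → ℝ := fun k t => ∑ j, w k j * ((1+t)⁻¹ - (μ j + t)⁻¹) with hgk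
  set gρ : ℝ → ℝ := fun t => ∑ i, v i * ((1+t)⁻¹ - (lam i + t)⁻¹) with hgρ
  -- step 1: the form equals a real number
  have step1 : star x ⬝ᵥ ((hP.1.cfc Real.log) ⊗ₖ (1 : Matrix m m ℂ) - hρ.1.cfc Real.log) *ᵥ x
      = ((∑ k, ∑ j, w k j * Real.log (μ j)) - ∑ i, v i * Real.log (lam i) : ℝ) := by
    rw [Matrix.sub_mulVec, dotProduct_sub, kron_one_form, mcfc_form hρ.1]
    have : ∀ k : m, star (xk k) ⬝ᵥ (hP.1.cfc Real.log) *ᵥ (xk k)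
        = ((∑ j, w k j * Real.log (μ j) : ℝ) : ℂ) := by
      intro k
      rw [mcfc_form hP.1]
      push_cast
      exact Finset.sum_congr rfl fun j _ => by rw [mul_comm]; rfl
    push_cast
    rw [Finset.sum_congr rfl fun k _ => this k]
    push_cast
    congr 1
    refine Finset.sum_congr rfl fun i _ => by rw [mul_comm]; rfl
  rw [step1]
  -- step 2 : express as an integral
  have hintk : ∀ k, IntegrableOn (gk k) (Ioi (0:ℝ)) := fun k => (intrep hP (xk k)).1
  have hintρ : IntegrableOn gρ (Ioi (0:ℝ)) := (intrep hρ x).1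
  have hsumint : IntegrableOn (fun t => ∑ k, gk k t) (Ioi (0:ℝ)) :=
    integrable_finset_sum _ fun k _ => hintk k
  have step2 : (∑ k, ∑ j, w k j * Real.log (μ j)) - ∑ i, v i * Real.log (lam i)
      = ∫ t in Ioi (0:ℝ), ((∑ k, gk k t) - gρ t) := by
    rw [integral_sub hsumint hintρ, integral_finset_sum _ fun k _ => hintk k]
    rw [(intrep hρ x).2]
    congr 1
    exact Finset.sum_congr rfl fun k _ => ((intrep hP (xk k)).2).symm
  -- step 3 : pointwise nonnegativity of the integrand
  have step3 : ∀ t ∈ Ioi (0:ℝ), 0 ≤ (∑ k, gk k t) - gρ t := by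
    intro t ht
    have ht' : (0:ℝ) ≤ t := le_of_lt ht
    have hθ : (ρ + (t:ℂ) • 1).PosDef := shift_posDef hρ ht'
    have hτ : ((P ⊗ₖ (1 : Matrix m m ℂ)) + (t:ℂ) • 1).PosDef := shift_posDef hσ ht'
    have hdiff : (((P ⊗ₖ (1 : Matrix m m ℂ)) + (t:ℂ) • 1) - (ρ + (t:ℂ) • 1)).PosSemidef := by
      rwa [add_sub_add_right_eq_sub]
    have hmono := inv_form_mono hθ hτ hdiff x
    -- resolvent forms
    have cresρ := form_resolvent hρ x ht'
    have cresσ : star x ⬝ᵥ ((P ⊗ₖ (1 : Matrix m m ℂ)) + (t:ℂ) • 1)⁻¹ *ᵥ x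
        = ((∑ k, ∑ j, (μ j + t)⁻¹ * w k j : ℝ) : ℂ) := by
      rw [kron_one_shift_inv, kron_one_form]
      rw [show ((∑ k, ∑ j, (μ j + t)⁻¹ * w k j : ℝ) : ℂ)
          = ∑ k, ((∑ j, (μ j + t)⁻¹ * w k j : ℝ) : ℂ) by push_cast; rfl]
      exact Finset.sum_congr rfl fun k _ => form_resolvent hP (xk k) ht'
    -- total weights agree
    have cw : ((∑ k, ∑ j, w k j : ℝ) : ℂ) = ((∑ i, v i : ℝ) : ℂ) := by
      rw [← form_one hρ.1 x]
      have h1 := kron_one_form (1 : Matrix n n ℂ) x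
      rw [Matrix.one_kronecker_one, one_mulVec] at h1
      rw [h1]
      rw [show ((∑ k, ∑ j, w k j : ℝ) : ℂ) = ∑ k, ((∑ j, w k j : ℝ) : ℂ) by push_cast; rfl]
      refine Finset.sum_congr rfl fun k _ => ?_
      rw [one_mulVec]
      exact (form_one hP.1 (xk k)).symm
    have cwr : (∑ k, ∑ j, w k j : ℝ) = ∑ i, v i := by exact_mod_cast cw
    -- compare
    have hRle : (∑ k, ∑ j, (μ j + t)⁻¹ * w k j : ℝ) ≤ ∑ i, (lam i + t)⁻¹ * v i := by
      have : ((∑ k, ∑ j, (μ j + t)⁻¹ * w k j : ℝ) : ℂ)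
          ≤ ((∑ i, (lam i + t)⁻¹ * v i : ℝ) : ℂ) := by
        rw [← cresσ, ← cresρ]
        exact hmono
      exact_mod_cast this
    have expand : (∑ k, gk k t) - gρ t
        = (∑ i, (lam i + t)⁻¹ * v i) - (∑ k, ∑ j, (μ j + t)⁻¹ * w k j) := by
      have e1 : ∀ k, gk k t = (1+t)⁻¹ * (∑ j, w k j) - ∑ j, (μ j + t)⁻¹ * w k j := by
        intro k
        rw [hgk]
        simp only [mul_sub, Finset.sum_sub_distrib, Finset.mul_sum]
        congr 1
        · exact Finset.sum_congr rfl fun j _ => by ring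
        · exact Finset.sum_congr rfl fun j _ => by ring
      have e2 : gρ t = (1+t)⁻¹ * (∑ i, v i) - ∑ i, (lam i + t)⁻¹ * v i := by
        rw [hgρ]
        simp only [mul_sub, Finset.sum_sub_distrib, Finset.mul_sum]
        congr 1
        · exact Finset.sum_congr rfl fun i _ => by ring
        · exact Finset.sum_congr rfl fun i _ => by ring
      simp only [e1, e2, Finset.sum_sub_distrib, ← Finset.mul_sum]
      rw [cwr]
      ring
    rw [expand]
    linarith
  -- conclude
  have : (0:ℝ) ≤ (∑ k, ∑ j, w k j * Real.log (μ j)) - ∑ i, v i * Real.log (lam i) := by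
    rw [step2]
    exact setIntegral_nonneg measurableSet_Ioi step3
  exact_mod_cast this


end McfcAux

open McfcAux

/-- If `ρ_A ⊗ 1 ≥ ρ > 0` for a full-rank density matrix `ρ`, then `S(ρ_A) ≤ S(ρ)`. -/
theorem stmt11 {nA nB : Type*} [Fintype nA] [Fintype nB] [DecidableEq nA] [DecidableEq nB]
    (ρ : Matrix (nA × nB) (nA × nB) ℂ) (hρ : ρ.PosDef) (htr : ρ.trace = 1)
    (hred : (ptraceB ρ ⊗ₖ (1 : Matrix nB nB ℂ) - ρ).PosSemidef) :
    vnEntropy (ptraceB ρ) ≤ vnEntropy ρ := by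
  -- ρ_A is Hermitian
  have hermPA : (ptraceB ρ).IsHermitian := by
    ext i j
    simp only [conjTranspose_apply, ptraceB, star_sum]
    exact Finset.sum_congr rfl fun k _ => hρ.1.apply _ _
  -- nB is nonempty
  have hNB : Nonempty nB := by
    by_contra h
    rw [not_nonempty_iff] at h
    have : IsEmpty (nA × nB) := ⟨fun p => h.elim p.2⟩
    have h0 : ρ.trace = 0 := by
      simp [Matrix.trace]
    rw [htr] at h0
    exact one_ne_zero h0
  -- ρ_A is positive definite
  have hPD : (ptraceB ρ).PosDef := by
    refine PosDef.of_dotProduct_mulVec_pos hermPA fun y hy => ?_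
    obtain ⟨k0⟩ := hNB
    set e : nB → (nA × nB) → ℂ := fun k p => if p.2 = k then y p.1 else 0 with he
    have L : star y ⬝ᵥ (ptraceB ρ) *ᵥ y = ∑ i, ∑ j, ∑ k, star (y i) * ρ (i,k) (j,k) * y j := by
      simp only [dotProduct, Matrix.mulVec, Pi.star_apply, ptraceB, Finset.sum_mul,
        Finset.mul_sum]
      refine Finset.sum_congr rfl fun i _ => Finset.sum_congr rfl fun j _ =>
        Finset.sum_congr rfl fun k _ => by ring
    have R : ∀ k, star (e k) ⬝ᵥ ρ *ᵥ (e k) = ∑ i, ∑ j, star (y i) * ρ (i,k) (j,k) * y j := by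
      intro k
      simp only [dotProduct, Matrix.mulVec, Pi.star_apply, he]
      rw [Fintype.sum_prod_type]
      refine Finset.sum_congr rfl fun i _ => ?_
      rw [show ∀ z : nB → ℂ, ∑ l, z l = ∑ l, z l from fun _ => rfl]
      -- collapse the l-sum: only l = k contributes
      rw [Finset.sum_eq_single k (fun l _ hl => by simp [hl]) (by simp)]
      simp only [if_pos rfl]
      rw [Finset.mul_sum, Fintype.sum_prod_type]
      refine Finset.sum_congr rfl fun j _ => ?_
      rw [Finset.sum_eq_single k (fun l _ hl => by simp [hl]) (by simp)]
      simp only [if_pos rfl, if_true, eq_self_iff_true]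
      ring
    have hform : star y ⬝ᵥ (ptraceB ρ) *ᵥ y = ∑ k, star (e k) ⬝ᵥ ρ *ᵥ (e k) := by
      rw [L, Finset.sum_congr rfl fun k (_ : k ∈ Finset.univ) => R k]
      rw [show (∑ i, ∑ j, ∑ k, star (y i) * ρ (i,k) (j,k) * y j : ℂ)
          = ∑ i, ∑ k, ∑ j, star (y i) * ρ (i,k) (j,k) * y j from
        Finset.sum_congr rfl fun i _ => Finset.sum_comm]
      exact Finset.sum_comm
    rw [hform]
    have hek0 : e k0 ≠ 0 := by
      obtain ⟨i0, hi0⟩ := Function.ne_iff.mp hy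
      intro hzero
      apply hi0
      have := congrFun hzero (i0, k0)
      simpa [he] using this
    refine Finset.sum_pos' (fun k _ => hρ.posSemidef.dotProduct_mulVec_nonneg _) ⟨k0, Finset.mem_univ _, hρ.dotProduct_mulVec_pos hek0⟩
  -- trace identities
  set LP : Matrix nA nA ℂ := hPD.1.cfc Real.log with hLP
  set Lρ : Matrix (nA × nB) (nA × nB) ℂ := hρ.1.cfc Real.log with hLρ
  have hmulρ : ρ * Lρ = hρ.1.cfc (fun s => s * Real.log s) := by
    have h := mcfc_mul hρ.1 (fun s => s) Real.log
    rw [mcfc_id hρ.1] at h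
    exact h
  have hmulP : (ptraceB ρ) * LP = hPD.1.cfc (fun s => s * Real.log s) := by
    have h := mcfc_mul hPD.1 (fun s => s) Real.log
    rw [mcfc_id hPD.1] at h
    exact h
  have t1 : (ρ * Lρ).trace
      = ((∑ i, hρ.1.eigenvalues i * Real.log (hρ.1.eigenvalues i) : ℝ) : ℂ) := by
    rw [hmulρ, mcfc_trace]
  have t2 : ((ptraceB ρ) * LP).trace
      = ((∑ i, hPD.1.eigenvalues i * Real.log (hPD.1.eigenvalues i) : ℝ) : ℂ) := by
    rw [hmulP, mcfc_trace]
  have t3 : (ρ * (LP ⊗ₖ (1 : Matrix nB nB ℂ))).trace = ((ptraceB ρ) * LP).trace :=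
    kron_one_trace ρ LP (ptraceB ρ) (fun i j => rfl)
  -- key positivity
  have hK : ((LP ⊗ₖ (1 : Matrix nB nB ℂ)) - Lρ).PosSemidef := key_psd hρ hPD hred
  have key : 0 ≤ (ρ * ((LP ⊗ₖ (1 : Matrix nB nB ℂ)) - Lρ)).trace :=
    trace_mul_nonneg hρ.posSemidef hK
  rw [Matrix.mul_sub, Matrix.trace_sub, t1, t3, t2, ← Complex.ofReal_sub] at key
  have keyR : (0:ℝ) ≤ (∑ i, hPD.1.eigenvalues i * Real.log (hPD.1.eigenvalues i))
      - ∑ i, hρ.1.eigenvalues i * Real.log (hρ.1.eigenvalues i) := by exact_mod_cast key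
  unfold vnEntropy
  rw [dif_pos hPD.1, dif_pos hρ.1]
  linarith
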